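/- arXiv:1706.08608 — 3 statements merged into one kernel-verified Lean document; each statement's English description precedes it below -/
import Mathlib

section
/- Ultimately periodic decomposition of runs of flat Kripke structures: every infinite run ρ of a flat Kripke structure with state set S can be written as ρ = u_0^{n_0} u_1^{n_1} … u_{m−1}^{n_{m−1}} u_m^ω with finite nonempty paths u_0, …, u_m, positive integers n_0, …, n_{m−1}, and |u_0 u_1 … u_m| ≤ 2|S|. -/
def IsSimpleLoop {S : Type*} (E : S → S → Prop) (u : List S) : Prop :=
  u ≠ [] ∧ u.Chain' E ∧ (∀ a ∈ u.getLast?, ∀ b ∈ u.head?, E a b) ∧ u.Nodup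

def Flat {S : Type*} (E : S → S → Prop) : Prop :=
  ∀ s : S, {u : List S | IsSimpleLoop E u ∧ u.head? = some s}.Subsingleton

/-!
In a flat structure every closed walk winds around a single simple loop: splitting the walk at a
repeated state gives two shorter closed walks, whose loops share a state and are therefore
rotations of each other. Cut the run greedily: a state visited only finitely often is either never
revisited (a one-state block) or starts a simple loop that the run winds around until the last
visit of that state; from the time on which only states visited infinitely often occur, the run
winds around one loop forever. A later loop meeting an earlier loop block would revisit the first
state of that block, so loop blocks have pairwise disjoint states, and one-state blocks have
pairwise distinct states: each of the two kinds contributes at most `|S|` letters.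
-/

open Filter

section

variable {S : Type*} {E : S → S → Prop} {ρ : ℕ → S}

namespace IsSimpleLoop

theorem iff_cycle_chain {u : List S} :
    IsSimpleLoop E u ↔ u ≠ [] ∧ Cycle.Chain E (u : Cycle S) ∧ u.Nodup := by
  rcases u with _ | ⟨a, l⟩
  · simp [IsSimpleLoop]
  · change _ ∧ List.IsChain E _ ∧ _ ∧ _ ↔ _
    rw [Cycle.chain_coe_cons, ← List.cons_append, List.isChain_append]
    simp [and_assoc]

theorem length_pos {u : List S} (h : IsSimpleLoop E u) : 0 < u.length :=
  List.length_pos_iff.2 h.1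

theorem rotate {u : List S} (h : IsSimpleLoop E u) (k : ℕ) : IsSimpleLoop E (u.rotate k) := by
  rw [iff_cycle_chain] at h ⊢
  obtain ⟨hne, hchain, hnodup⟩ := h
  refine ⟨by simpa using hne, ?_, List.nodup_rotate.2 hnodup⟩
  rwa [Cycle.coe_eq_coe.2 (List.IsRotated.forall u k)]

end IsSimpleLoop

theorem isSimpleLoop_map_range {f : ℕ → S} {n : ℕ} (hn : 0 < n)
    (hstep : ∀ k < n, E (f k) (f (k + 1))) (hclosed : f n = f 0)
    (hinj : ∀ i j, i < j → j < n → f i ≠ f j) : IsSimpleLoop E ((List.range n).map f) := by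
  obtain ⟨n, rfl⟩ := Nat.exists_eq_add_one_of_ne_zero hn.ne'
  refine IsSimpleLoop.iff_cycle_chain.2 ⟨by simp, ?_, ?_⟩
  · rw [← Cycle.map_coe, Cycle.chain_map, Cycle.chain_range_succ]
    exact ⟨hclosed ▸ hstep n n.lt_succ_self, fun m hm => hstep m (by omega)⟩
  · refine (List.nodup_map_iff_inj_on List.nodup_range).2 fun i hi j hj hij => ?_
    simp only [List.mem_range] at hi hj
    rcases lt_trichotomy i j with h | h | h
    exacts [absurd hij (hinj i j h hj), h, absurd hij.symm (hinj j i h hi)]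

namespace Flat

theorem eq_rotate (hflat : Flat E) {L M : List S} (hL : IsSimpleLoop E L)
    (hM : IsSimpleLoop E M) {i : ℕ} (hi : i < M.length) (h : L[0]? = M[i]?) :
    L = M.rotate i := by
  obtain ⟨x, hx⟩ : ∃ x, M[i]? = some x := ⟨_, List.getElem?_eq_getElem hi⟩
  refine hflat x ⟨hL, by rwa [List.head?_eq_getElem?, h]⟩ ⟨hM.rotate i, ?_⟩
  rwa [List.head?_eq_getElem?, List.getElem?_rotate (by simpa using hM.length_pos), zero_add,
    Nat.mod_eq_of_lt hi]

theorem mem_of_mem (hflat : Flat E) {L M : List S} (hL : IsSimpleLoop E L)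
    (hM : IsSimpleLoop E M) {x y : S} (hxL : x ∈ L) (hxM : x ∈ M) (hy : y ∈ L) : y ∈ M := by
  obtain ⟨a, ha, rfl⟩ := List.getElem_of_mem hxL
  obtain ⟨b, hb, hba⟩ := List.getElem_of_mem hxM
  have := hflat.eq_rotate (hL.rotate a) hM hb (by
    rw [List.getElem?_rotate hL.length_pos, zero_add, Nat.mod_eq_of_lt ha,
      List.getElem?_eq_getElem ha, List.getElem?_eq_getElem hb, hba])
  rw [← List.mem_rotate (n := b), ← this, List.mem_rotate]
  exact hy

/-- `f i = f j` splits the closed walk `f 0, …, f n` into the inner closed walk `f i, …, f j`,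
wound around by `L₁`, and the outer one `f 0, …, f i, f (j + 1), …, f n`, wound around by `L₂`.
By flatness `L₁` is `L₂` read from position `i`, so `L₂` winds around the whole walk. -/
theorem closed_walk_of_splice (hflat : Flat E) {f : ℕ → S} {n i j : ℕ} (hij : i < j)
    (hjn : j < n) {L₁ L₂ : List S} (hL₁ : IsSimpleLoop E L₁) (hdvd₁ : L₁.length ∣ j - i)
    (hf₁ : ∀ k ≤ j - i, L₁[k % L₁.length]? = some (f (i + k)))
    (hL₂ : IsSimpleLoop E L₂) (hdvd₂ : L₂.length ∣ n - (j - i))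
    (hf₂ : ∀ k ≤ n - (j - i),
      L₂[k % L₂.length]? = some (f (if k ≤ i then k else k + (j - i)))) :
    L₂.length ∣ n ∧ ∀ k ≤ n, L₂[k % L₂.length]? = some (f k) := by
  set p := L₂.length
  have hrot : L₁ = L₂.rotate (i % p) := by
    refine hflat.eq_rotate hL₁ hL₂ (Nat.mod_lt _ hL₂.length_pos) ?_
    have h₁ := hf₁ 0 (Nat.zero_le _)
    have h₂ := hf₂ i (by omega)
    simp only [Nat.zero_mod, add_zero, le_refl, if_true] at h₁ h₂
    rw [h₁, h₂]
  have hdvd : p ∣ j - i := by simpa [hrot] using hdvd₁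
  refine ⟨by simpa [Nat.sub_add_cancel (show j - i ≤ n by omega)] using dvd_add hdvd₂ hdvd,
    fun k hk => ?_⟩
  rcases le_or_gt k i with hki | hik
  · simpa [hki] using hf₂ k (by omega)
  rcases le_or_gt k j with hkj | hjk
  · have := hf₁ (k - i) (by omega)
    rwa [hrot, List.length_rotate,
      List.getElem?_rotate (by simp [Nat.mod_lt _ hL₂.length_pos]), ← Nat.add_mod,
      Nat.sub_add_cancel hik.le, Nat.add_sub_cancel' hik.le] at this
  · obtain ⟨c, hc⟩ := hdvd
    have := hf₂ (k - (j - i)) (by omega)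
    rwa [if_neg (by omega), Nat.sub_add_cancel (by omega), ← Nat.add_mul_mod_self_left _ p c,
      ← hc, Nat.sub_add_cancel (by omega)] at this

theorem exists_simpleLoop_of_closed_walk (hflat : Flat E) {f : ℕ → S} {n : ℕ} (hn : 0 < n)
    (hstep : ∀ k < n, E (f k) (f (k + 1))) (hclosed : f n = f 0) :
    ∃ L, IsSimpleLoop E L ∧ L.length ∣ n ∧ ∀ k ≤ n, L[k % L.length]? = some (f k) := by
  induction n using Nat.strong_induction_on generalizing f with
  | _ n ih =>
  by_cases hrep : ∃ i j, i < j ∧ j < n ∧ f i = f j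
  · obtain ⟨i, j, hij, hjn, hfij⟩ := hrep
    obtain ⟨L₁, hL₁, hdvd₁, hf₁⟩ := ih (j - i) (by omega) (f := fun k => f (i + k)) (by omega)
      (fun k hk => by simpa [add_assoc] using hstep (i + k) (by omega))
      (by simp [Nat.add_sub_cancel' hij.le, hfij])
    obtain ⟨L₂, hL₂, hdvd₂, hf₂⟩ := ih (n - (j - i)) (by omega)
      (f := fun k => f (if k ≤ i then k else k + (j - i))) (by omega)
      (fun k hk => by
        rcases lt_trichotomy k i with hki | rfl | hki
        · simpa [hki.le, Nat.succ_le_of_lt hki] using hstep k (by omega)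
        · simpa [show k + 1 + (j - k) = j + 1 by omega, hfij] using hstep j hjn
        · simpa [hki.not_ge, show ¬k + 1 ≤ i by omega,
            show k + 1 + (j - i) = k + (j - i) + 1 by omega] using hstep (k + (j - i)) (by omega))
      (by simpa [show ¬n - (j - i) ≤ i by omega, show n - (j - i) + (j - i) = n by omega]
        using hclosed)
    exact ⟨L₂, hL₂, hflat.closed_walk_of_splice hij hjn hL₁ hdvd₁ hf₁ hL₂ hdvd₂ hf₂⟩
  · push Not at hrep
    refine ⟨_, isSimpleLoop_map_range hn hstep hclosed hrep, by simp, fun k hk => ?_⟩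
    rcases hk.lt_or_eq with hk | rfl
    · simp [Nat.mod_eq_of_lt hk, hk]
    · simp [hn, hclosed]

theorem exists_simpleLoop_of_return (hflat : Flat E) (hrun : ∀ k, E (ρ k) (ρ (k + 1)))
    {t τ : ℕ} (htτ : t < τ) (hτ : ρ τ = ρ t) :
    ∃ L, IsSimpleLoop E L ∧ L.length ∣ τ - t ∧
      ∀ k ≤ τ - t, L[k % L.length]? = some (ρ (t + k)) :=
  hflat.exists_simpleLoop_of_closed_walk (f := fun k => ρ (t + k)) (by omega)
    (fun k _ => hrun (t + k)) (by simpa [Nat.add_sub_cancel' htτ.le])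

theorem exists_simpleLoop_of_frequently (hflat : Flat E) (hrun : ∀ k, E (ρ k) (ρ (k + 1)))
    {t : ℕ} (hfreq : ∃ᶠ τ in atTop, ρ τ = ρ t) :
    ∃ L, IsSimpleLoop E L ∧ ∀ j, L[j % L.length]? = some (ρ (t + j)) := by
  have hloop (j : ℕ) : ∃ L, IsSimpleLoop E L ∧ ∀ k ≤ j, L[k % L.length]? = some (ρ (t + k)) := by
    obtain ⟨τ, hτj, hτ⟩ := frequently_atTop.1 hfreq (t + j + 1)
    obtain ⟨L, hL, -, hfollow⟩ := hflat.exists_simpleLoop_of_return hrun (by omega) hτ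
    exact ⟨L, hL, fun k hk => hfollow k (by omega)⟩
  obtain ⟨L, hL, hfollow⟩ := hloop 0
  refine ⟨L, hL, fun j => ?_⟩
  obtain ⟨M, hM, hfollowM⟩ := hloop j
  have hML : M = L := by
    have hhead := (hfollowM 0 (Nat.zero_le j)).trans (hfollow 0 le_rfl).symm
    simpa using hflat.eq_rotate hM hL hL.length_pos (by simpa using hhead)
  exact hML ▸ hfollowM j le_rfl

end Flat

variable (ρ) in
theorem eventually_frequently_eq [Finite S] :
    ∀ᶠ τ in atTop, ∃ᶠ τ' in atTop, ρ τ' = ρ τ := by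
  have : ∀ᶠ τ in atTop, ∀ s, ρ τ = s → ∃ᶠ τ' in atTop, ρ τ' = s := by
    refine eventually_all.2 fun s => ?_
    by_cases hs : ∃ᶠ τ' in atTop, ρ τ' = s
    · exact .of_forall fun _ _ => hs
    · exact (not_frequently.1 hs).mono fun τ hτ hτs => absurd hτs hτ
  exact this.mono fun τ hτ => hτ _ rfl

theorem exists_last_of_not_frequently {t : ℕ} (h : ¬∃ᶠ τ in atTop, ρ τ = ρ t) :
    ∃ b ≥ t, ρ b = ρ t ∧ ∀ τ > b, ρ τ ≠ ρ t := by
  classical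
  obtain ⟨N, hN⟩ := eventually_atTop.1 (not_frequently.1 h)
  have htN : t ≤ N := by by_contra! hNt; exact hN t hNt.le rfl
  refine ⟨Nat.findGreatest (fun τ => ρ τ = ρ t) N, Nat.le_findGreatest htN rfl,
    Nat.findGreatest_spec (P := fun τ => ρ τ = ρ t) htN rfl, fun τ hτ => ?_⟩
  rcases le_or_gt τ N with hτN | hτN
  · exact Nat.findGreatest_is_greatest hτ hτN
  · exact hN τ hτN.le

def ReadsFrom (ρ : ℕ → S) (t : ℕ) (u : List S) : Prop :=
  ∀ k < u.length, u[k]? = some (ρ (t + k))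

theorem ReadsFrom.append {t : ℕ} {u v : List S} (hu : ReadsFrom ρ t u)
    (hv : ReadsFrom ρ (t + u.length) v) : ReadsFrom ρ t (u ++ v) := by
  intro k hk
  rcases lt_or_ge k u.length with hku | hku
  · rw [List.getElem?_append_left hku, hu k hku]
  · rw [List.getElem?_append_right hku, hv (k - u.length) (by simp at hk; omega)]
    congr 2
    omega

theorem readsFrom_flatten_replicate {L : List S} {n t : ℕ}
    (h : ∀ k < n * L.length, L[k % L.length]? = some (ρ (t + k))) :
    ReadsFrom ρ t (List.replicate n L).flatten := by
  induction n generalizing t with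
  | zero => simp [ReadsFrom]
  | succ n ih =>
    rw [List.replicate_succ, List.flatten_cons]
    refine ReadsFrom.append (fun k hk => ?_) (ih fun k hk => ?_)
    · simpa [Nat.mod_eq_of_lt hk] using h k (by rw [Nat.succ_mul]; omega)
    · simpa [add_assoc] using h (L.length + k) (by rw [Nat.succ_mul]; omega)

theorem exists_gt_eq_of_mem_loop {t : ℕ} {L : List S}
    (h : ∀ k ≤ L.length, L[k % L.length]? = some (ρ (t + k))) {y : S} (hy : y ∈ L) :
    ∃ τ > t, ρ τ = y := by
  obtain ⟨δ, hδ, rfl⟩ := List.getElem_of_mem hy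
  rcases Nat.eq_zero_or_pos δ with rfl | hδ₀
  · refine ⟨t + L.length, by omega, ?_⟩
    simpa [List.getElem?_eq_getElem hδ, eq_comm] using h L.length le_rfl
  · refine ⟨t + δ, by omega, ?_⟩
    simpa [Nat.mod_eq_of_lt hδ, List.getElem?_eq_getElem hδ, eq_comm] using h δ hδ.le

/-- `RunDecomp E ρ t bs w`: from time `t` on, `ρ` reads `L₀^n₀ L₁^n₁ ⋯ w^ω` where
`bs = [(L₀, n₀), (L₁, n₁), …]`. Each block is either a simple loop traversed `n ≥ 1` times,
after which its first state is never visited again, or a single state never visited again. -/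
inductive RunDecomp (E : S → S → Prop) (ρ : ℕ → S) : ℕ → List (List S × ℕ) → List S → Prop
  | final {t : ℕ} {w : List S} : IsSimpleLoop E w →
      (∀ j, w[j % w.length]? = some (ρ (t + j))) → RunDecomp E ρ t [] w
  | single {t : ℕ} {bs : List (List S × ℕ)} {w : List S} : (∀ τ > t, ρ τ ≠ ρ t) →
      RunDecomp E ρ (t + 1) bs w → RunDecomp E ρ t (([ρ t], 1) :: bs) w
  | loop {t n : ℕ} {L : List S} {bs : List (List S × ℕ)} {w : List S} :
      IsSimpleLoop E L → 0 < n →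
      (∀ k ≤ n * L.length, L[k % L.length]? = some (ρ (t + k))) →
      (∀ τ > t + n * L.length, ρ τ ≠ ρ t) →
      RunDecomp E ρ (t + n * L.length) bs w → RunDecomp E ρ t ((L, n) :: bs) w

def blocksWord (bs : List (List S × ℕ)) : List S :=
  (bs.map fun b => (List.replicate b.2 b.1).flatten).flatten

namespace RunDecomp

variable {t : ℕ} {bs : List (List S × ℕ)} {w : List S}

theorem isSimpleLoop (h : RunDecomp E ρ t bs w) : IsSimpleLoop E w := by
  induction h with
  | final hw _ => exact hw
  | single _ _ ih => exact ih
  | loop _ _ _ _ _ ih => exact ih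

theorem forall_mem (h : RunDecomp E ρ t bs w) : ∀ b ∈ bs, b.1 ≠ [] ∧ 0 < b.2 := by
  induction h with
  | final => simp
  | single _ _ ih => simpa using ih
  | loop hL hn _ _ _ ih => simpa [hL.1, hn] using ih

theorem readsFrom (h : RunDecomp E ρ t bs w) : ReadsFrom ρ t (blocksWord bs) := by
  induction h with
  | final => simp [blocksWord, ReadsFrom]
  | @single t bs w _ _ ih =>
    refine ReadsFrom.append (fun k hk => ?_) (by simpa [blocksWord, add_comm 1] using ih)
    simp at hk
    simp [hk]
  | loop _ _ hfollow _ _ ih =>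
    refine ReadsFrom.append (readsFrom_flatten_replicate fun k hk => hfollow k hk.le) ?_
    simpa [blocksWord] using ih

theorem tail (h : RunDecomp E ρ t bs w) :
    ∀ j, w[j % w.length]? = some (ρ (t + (blocksWord bs).length + j)) := by
  induction h with
  | final _ hper => simpa [blocksWord] using hper
  | single _ _ ih => simpa [blocksWord, add_assoc, add_comm 1] using ih
  | loop _ _ _ _ _ ih => simpa [blocksWord, add_assoc] using ih

/-- `A` collects the states of the loop blocks and of `w`, `B` those of the one-state blocks. -/
theorem exists_finsets (hflat : Flat E) (h : RunDecomp E ρ t bs w) :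
    ∃ A B : Finset S, (bs.map Prod.fst).flatten.length + w.length ≤ A.card + B.card ∧
      (∀ x ∈ A, ∃ M, IsSimpleLoop E M ∧ x ∈ M ∧ ∀ y ∈ M, ∃ τ > t, ρ τ = y) ∧
      ∀ y ∈ B, ∃ τ ≥ t, ρ τ = y := by
  classical
  induction h with
  | @final t w hw hper =>
    refine ⟨w.toFinset, ∅, by simp [List.toFinset_card_of_nodup hw.2.2.2], fun x hx => ?_,
      by simp⟩
    exact ⟨w, hw, List.mem_toFinset.1 hx,
      fun y hy => exists_gt_eq_of_mem_loop (fun k _ => hper k) hy⟩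
  | @single t bs w hnever _ ih =>
    obtain ⟨A, B, hcard, hA, hB⟩ := ih
    have hnotMem : ρ t ∉ B := fun hmem => by
      obtain ⟨τ, hτ, hρτ⟩ := hB _ hmem
      exact hnever τ hτ hρτ
    refine ⟨A, insert (ρ t) B, ?_, fun x hx => ?_, fun y hy => ?_⟩
    · simp [Finset.card_insert_of_notMem hnotMem]
      simp at hcard
      omega
    · obtain ⟨M, hM, hxM, hvisit⟩ := hA x hx
      exact ⟨M, hM, hxM, fun y hy => (hvisit y hy).imp fun τ hτ => ⟨by omega, hτ.2⟩⟩
    · rcases Finset.mem_insert.1 hy with rfl | hy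
      · exact ⟨t, le_rfl, rfl⟩
      · exact (hB y hy).imp fun τ hτ => ⟨by omega, hτ.2⟩
  | @loop t n L bs w hL hn hfollow hnever _ ih =>
    obtain ⟨A, B, hcard, hA, hB⟩ := ih
    have hfollow₁ : ∀ k ≤ L.length, L[k % L.length]? = some (ρ (t + k)) :=
      fun k hk => hfollow k (hk.trans (Nat.le_mul_of_pos_left _ hn))
    have hdisj : Disjoint L.toFinset A := by
      refine Finset.disjoint_left.2 fun x hxL hxA => ?_
      obtain ⟨M, hM, hxM, hvisit⟩ := hA x hxA
      have hstart : ρ t ∈ L := by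
        simpa using List.mem_of_getElem? (hfollow₁ 0 (Nat.zero_le _))
      obtain ⟨τ, hτ, hρτ⟩ :=
        hvisit _ (hflat.mem_of_mem hL hM (List.mem_toFinset.1 hxL) hxM hstart)
      exact hnever τ hτ hρτ
    refine ⟨L.toFinset ∪ A, B, ?_, fun x hx => ?_, fun y hy => ?_⟩
    · rw [Finset.card_union_of_disjoint hdisj, List.toFinset_card_of_nodup hL.2.2.2]
      simp at hcard ⊢
      omega
    · rcases Finset.mem_union.1 hx with hx | hx
      · exact ⟨L, hL, List.mem_toFinset.1 hx, fun y hy => exists_gt_eq_of_mem_loop hfollow₁ hy⟩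
      · obtain ⟨M, hM, hxM, hvisit⟩ := hA x hx
        exact ⟨M, hM, hxM, fun y hy => (hvisit y hy).imp fun τ hτ => ⟨by omega, hτ.2⟩⟩
    · exact (hB y hy).imp fun τ hτ => ⟨by omega, hτ.2⟩

theorem length_le [Fintype S] (hflat : Flat E) (h : RunDecomp E ρ t bs w) :
    (bs.map Prod.fst).flatten.length + w.length ≤ 2 * Fintype.card S := by
  obtain ⟨A, B, hcard, -⟩ := h.exists_finsets hflat
  have := A.card_le_univ
  have := B.card_le_univ
  omega

end RunDecomp

theorem Flat.exists_runDecomp (hflat : Flat E) (hrun : ∀ k, E (ρ k) (ρ (k + 1)))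
    {T : ℕ} (hT : ∀ τ ≥ T, ∃ᶠ τ' in atTop, ρ τ' = ρ τ) (t : ℕ) :
    ∃ bs w, RunDecomp E ρ t bs w := by
  by_cases hfreq : ∃ᶠ τ in atTop, ρ τ = ρ t
  · obtain ⟨w, hw, hper⟩ := hflat.exists_simpleLoop_of_frequently hrun hfreq
    exact ⟨[], w, .final hw hper⟩
  obtain ⟨b, htb, hb, hlast⟩ := exists_last_of_not_frequently hfreq
  have hbT : b < T := by
    by_contra! hTb
    exact hfreq (hb ▸ hT b hTb)
  obtain ⟨bs, w, hdecomp⟩ := hflat.exists_runDecomp hrun hT (b + 1)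
  have hsingle : RunDecomp E ρ b (([ρ b], 1) :: bs) w := .single (hb ▸ hlast) hdecomp
  rcases htb.eq_or_lt with rfl | htb
  · exact ⟨_, w, hsingle⟩
  obtain ⟨L, hL, ⟨n, hn⟩, hfollow⟩ := hflat.exists_simpleLoop_of_return hrun htb hb
  have hb' : t + n * L.length = b := by rw [mul_comm, ← hn]; omega
  have hn₀ : 0 < n := Nat.pos_of_ne_zero fun h₀ => by simp [h₀] at hn; omega
  exact ⟨(L, n) :: ([ρ b], 1) :: bs, w,
    .loop hL hn₀ (fun k hk => hfollow k (by omega)) (hb' ▸ hlast) (hb' ▸ hsingle)⟩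
termination_by T - t

end

theorem stmt10_general {S : Type*} [Fintype S] (E : S → S → Prop)
    (hflat : Flat E) (ρ : ℕ → S)
    (hrun : ∀ k, E (ρ k) (ρ (k + 1))) :
    ∃ (m : ℕ) (u : ℕ → List S) (nr : ℕ → ℕ),
      (∀ i, i ≤ m → u i ≠ []) ∧
      (∀ i, i < m → 1 ≤ nr i) ∧
      ((List.range (m + 1)).map u).flatten.length ≤ 2 * Fintype.card S ∧
      (∀ k, k < (((List.range m).map
            (fun i => (List.replicate (nr i) (u i)).flatten)).flatten).length →
          (((List.range m).map
            (fun i => (List.replicate (nr i) (u i)).flatten)).flatten)[k]? = some (ρ k)) ∧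
      (∀ j : ℕ,
          (u m)[j % (u m).length]? =
            some (ρ ((((List.range m).map
              (fun i => (List.replicate (nr i) (u i)).flatten)).flatten).length + j))) := by
  obtain ⟨T, hT⟩ := eventually_atTop.1 (eventually_frequently_eq ρ)
  obtain ⟨bs, w, h⟩ := hflat.exists_runDecomp hrun hT 0
  set u : ℕ → List S := fun i => if h : i < bs.length then bs[i].1 else w
  set nr : ℕ → ℕ := fun i => if h : i < bs.length then bs[i].2 else 0
  have hu : (List.range (bs.length + 1)).map u = bs.map Prod.fst ++ [w] :=
    List.ext_getElem (by simp) fun i _ _ => by simp [u, List.getElem_append]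
  have hword : (List.range bs.length).map (fun i => (List.replicate (nr i) (u i)).flatten) =
      bs.map fun b => (List.replicate b.2 b.1).flatten :=
    List.ext_getElem (by simp) fun i hi _ => by simp at hi; simp [u, nr, hi]
  have hum : u bs.length = w := by simp [u]
  refine ⟨bs.length, u, nr, fun i hi => ?_, fun i hi => ?_, ?_, ?_, ?_⟩
  · rcases hi.lt_or_eq with hi | rfl
    · simpa [u, hi] using (h.forall_mem _ (List.getElem_mem hi)).1
    · exact hum ▸ h.isSimpleLoop.1
  · simp only [nr, dif_pos hi]
    exact (h.forall_mem _ (List.getElem_mem hi)).2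
  · simpa [hu] using h.length_le hflat
  · simpa [hword, blocksWord, ReadsFrom] using h.readsFrom
  · simpa [hword, hum, blocksWord] using h.tail

/-- Every run of a flat Kripke structure decomposes as
`u_0^{n_0} u_1^{n_1} … u_{m-1}^{n_{m-1}} u_m^ω` with `|u_0 … u_m| ≤ 2|S|`. -/
theorem stmt10 {S : Type*} [Fintype S] (E : S → S → Prop) (sI : S)
    (hflat : Flat E) (ρ : ℕ → S) (hinit : ρ 0 = sI)
    (hrun : ∀ k, E (ρ k) (ρ (k + 1))) :
    ∃ (m : ℕ) (u : ℕ → List S) (nr : ℕ → ℕ),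
      (∀ i, i ≤ m → u i ≠ []) ∧
      (∀ i, i < m → 1 ≤ nr i) ∧
      ((List.range (m + 1)).map u).flatten.length ≤ 2 * Fintype.card S ∧
      (∀ k, k < (((List.range m).map
            (fun i => (List.replicate (nr i) (u i)).flatten)).flatten).length →
          (((List.range m).map
            (fun i => (List.replicate (nr i) (u i)).flatten)).flatten)[k]? = some (ρ k)) ∧
      (∀ j : ℕ,
          (u m)[j % (u m).length]? =
            some (ρ ((((List.range m).map
              (fun i => (List.replicate (nr i) (u i)).flatten)).flatten).length + j))) :=
  stmt10_general E hflat ρ hrun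
end

section
/- Periodicity transfer for frequency-until, good-loop case (Lemma: periodic, item 1): Let σ = u v^N w be an infinite labelled word where each position is labelled by subsets of {φ, ψ}, with v a finite block. Suppose bal_φ(v) ≥ 0 (v is good or neutral), and let i_1, i_2 be positions with |u| ≤ i_1 ≤ i_2 = i_1 + n·|v| < |u v^N|. If there is a position i_3 ≥ i_2 with ψ holding at i_3 and bal_φ(σ[i_2 .. i_3−1]) ≥ 0, then there is a position i_3' ≥ i_1 with ψ holding at i_3' and bal_φ(σ[i_1 .. i_3'−1]) ≥ 0. -/
/-- Balance of the segment `σ[a..b-1]` of an infinite labelled word. -/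
def balSeg (x y : ℕ) (σ : ℕ → Bool) (a b : ℕ) : ℤ :=
  (y : ℤ) * (((Finset.Ico a b).filter (fun j => σ j = true)).card : ℤ)
    - (x : ℤ) * ((b - a : ℕ) : ℤ)

lemma balSeg_add (x y : ℕ) (f : ℕ → Bool) (a b c : ℕ) (hab : a ≤ b) (hbc : b ≤ c) :
    balSeg x y f a c = balSeg x y f a b + balSeg x y f b c := by
  unfold balSeg
  have h1 : Finset.Ico a c = Finset.Ico a b ∪ Finset.Ico b c := by
    rw [Finset.Ico_union_Ico_eq_Ico hab hbc]
  have hdisj : Disjoint (Finset.Ico a b) (Finset.Ico b c) := by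
    simp [Finset.disjoint_left]
    intro i _ h2 h3
    omega
  rw [h1, Finset.filter_union,
    Finset.card_union_of_disjoint (Finset.disjoint_filter_filter hdisj)]
  have : (c - a : ℕ) = (b - a) + (c - b) := by omega
  rw [this]
  push_cast
  ring

lemma balSeg_singleton (x y : ℕ) (f : ℕ → Bool) (j : ℕ) :
    balSeg x y f j (j + 1) = (y : ℤ) * (if f j = true then 1 else 0) - x := by
  unfold balSeg
  have : Finset.Ico j (j + 1) = {j} := by
    ext i; simp
  rw [this]
  by_cases hf : f j = true <;> simp [Finset.filter_singleton, hf]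

lemma balSeg_shift (x y : ℕ) (f : ℕ → Bool) (p j : ℕ) (hp : 0 < p)
    (hf : f (j + p) = f j) :
    balSeg x y f (j + 1) (j + 1 + p) = balSeg x y f j (j + p) := by
  have h1 : balSeg x y f j (j + p + 1)
      = balSeg x y f j (j + 1) + balSeg x y f (j + 1) (j + p + 1) :=
    balSeg_add x y f j (j + 1) (j + p + 1) (by omega) (by omega)
  have h2 : balSeg x y f j (j + p + 1)
      = balSeg x y f j (j + p) + balSeg x y f (j + p) (j + p + 1) :=
    balSeg_add x y f j (j + p) (j + p + 1) (by omega) (by omega)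
  have h3 := balSeg_singleton x y f j
  have h4 := balSeg_singleton x y f (j + p)
  rw [hf] at h4
  have : j + 1 + p = j + p + 1 := by omega
  rw [this]
  omega

lemma balSeg_window (x y : ℕ) (f : ℕ → Bool) (p N a : ℕ) (hp : 0 < p)
    (hper : ∀ j, a ≤ j → j + p < a + N * p → f (j + p) = f j) :
    ∀ d, a + d + p ≤ a + N * p →
      balSeg x y f (a + d) (a + d + p) = balSeg x y f a (a + p) := by
  intro d
  induction d with
  | zero => simp
  | succ d ih =>
    intro hd
    have key : f (a + d + p) = f (a + d) := hper (a + d) (by omega) (by omega)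
    have := balSeg_shift x y f p (a + d) hp key
    have hd' : a + d + p ≤ a + N * p := by omega
    have h2 := ih hd'
    have e1 : a + (d + 1) = a + d + 1 := by omega
    rw [e1, this, h2]

theorem stmt11 (x y : ℕ) (hxy : x ≤ y) (hy : 0 < y)
    (σ : ℕ → Bool × Bool) (a p n N i1 i2 : ℕ) (hp : 0 < p) (hN : 1 ≤ N)
    (hper : ∀ j, a ≤ j → j + p < a + N * p → σ (j + p) = σ j)
    (hgood : 0 ≤ balSeg x y (fun j => (σ j).1) a (a + p))
    (hi1 : a ≤ i1) (hi2 : i2 = i1 + n * p) (hlt : i2 < a + N * p)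
    (h : ∃ i3, i2 ≤ i3 ∧ (σ i3).2 = true ∧
        0 ≤ balSeg x y (fun j => (σ j).1) i2 i3) :
    ∃ i3, i1 ≤ i3 ∧ (σ i3).2 = true ∧
      0 ≤ balSeg x y (fun j => (σ j).1) i1 i3 := by
  set f : ℕ → Bool := fun j => (σ j).1 with hf
  have hperf : ∀ j, a ≤ j → j + p < a + N * p → f (j + p) = f j := by
    intro j h1 h2
    simp only [hf, hper j h1 h2]
  subst hi2
  induction n generalizing i1 with
  | zero => simpa using h
  | succ n ih =>
    have hmul : (n + 1) * p = n * p + p := by ring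
    have hwin : balSeg x y f i1 (i1 + p) = balSeg x y f a (a + p) := by
      have := balSeg_window x y f p N a hp hperf (i1 - a) (by omega)
      have e : a + (i1 - a) = i1 := by omega
      rwa [e] at this
    obtain ⟨i3, h3a, h3b, h3c⟩ := ih (i1 + p) (by omega) (by omega)
      (by
        obtain ⟨i3, h3a, h3b, h3c⟩ := h
        exact ⟨i3, by omega, h3b, by
          have e : i1 + p + n * p = i1 + (n + 1) * p := by ring
          rw [e]; exact h3c⟩)
    refine ⟨i3, by omega, h3b, ?_⟩
    rw [balSeg_add x y f i1 (i1 + p) i3 (by omega) (by omega)]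
    omega
end

section
/- Validity of frequency-until at a fixed position is monotone in loop repetitions of the witness-side loop: along σ = u v^n w with σ(j) = σ(j + |v|) for j in the v-region, if bal_φ(v) > 0 and φ U^{x/y} ψ holds at position i in the v-region, then it holds at every position i − k·|v| (k ≥ 0) still in the v-region with index ≥ |u|. -/
def FreqUntil (x y : ℕ) (σ : ℕ → Bool × Bool) (i : ℕ) : Prop :=
  ∃ k, i ≤ k ∧ (σ k).2 = true ∧ 0 ≤ balSeg x y (fun j => (σ j).1) i k

lemma balSeg_add_s15 (x y : ℕ) (σ' : ℕ → Bool) {c d e : ℕ} (h1 : c ≤ d) (h2 : d ≤ e) :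
    balSeg x y σ' c e = balSeg x y σ' c d + balSeg x y σ' d e := by
  unfold balSeg
  have hu : Finset.Ico c d ∪ Finset.Ico d e = Finset.Ico c e :=
    Finset.Ico_union_Ico_eq_Ico h1 h2
  have hdisj : Disjoint (Finset.Ico c d) (Finset.Ico d e) := by
    simp [Finset.disjoint_left]; omega
  have hcard : ((Finset.Ico c e).filter (fun j => σ' j = true)).card
      = ((Finset.Ico c d).filter (fun j => σ' j = true)).card
        + ((Finset.Ico d e).filter (fun j => σ' j = true)).card := by
    rw [← hu, Finset.filter_union, Finset.card_union_of_disjoint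
      (Finset.disjoint_filter_filter hdisj)]
  have hlen : (e - c : ℕ) = (d - c) + (e - d) := by omega
  rw [hcard, hlen]
  push_cast
  ring

lemma balSeg_shift_one (x y : ℕ) (σ' : ℕ → Bool) (c p : ℕ) (hp : 0 < p)
    (h : σ' (c + p) = σ' c) :
    balSeg x y σ' c (c + p) = balSeg x y σ' (c + 1) (c + 1 + p) := by
  unfold balSeg
  have hcard : ((Finset.Ico c (c + p)).filter (fun j => σ' j = true)).card
      = ((Finset.Ico (c + 1) (c + 1 + p)).filter (fun j => σ' j = true)).card := by
    classical
    rw [Finset.card_filter, Finset.card_filter]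
    rw [Finset.sum_eq_sum_Ico_succ_bot (by omega : c < c + p)]
    have he : c + 1 + p = (c + p) + 1 := by omega
    rw [he, Finset.sum_Ico_succ_top (by omega : c + 1 ≤ c + p)]
    simp only [h]
    exact add_comm _ _
  rw [hcard]
  have : c + p - c = c + 1 + p - (c + 1) := by omega
  rw [this]

lemma balSeg_window_s15 (x y : ℕ) (σ' : ℕ → Bool) (c p : ℕ) (hp : 0 < p) :
    ∀ m : ℕ, (∀ q, c ≤ q → q < c + m → σ' (q + p) = σ' q) →
      balSeg x y σ' c (c + p) = balSeg x y σ' (c + m) (c + m + p) := by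
  intro m
  induction m with
  | zero => intro _; rfl
  | succ m ih =>
    intro hper
    have h1 : balSeg x y σ' c (c + p) = balSeg x y σ' (c + m) (c + m + p) :=
      ih (fun q hq hq' => hper q hq (by omega))
    rw [h1]
    have := balSeg_shift_one x y σ' (c + m) p hp (hper (c + m) (by omega) (by omega))
    rw [this]
    congr 1 <;> omega

theorem stmt15 (x y : ℕ) (hxy : x ≤ y) (hy : 0 < y)
    (σ : ℕ → Bool × Bool) (a p n : ℕ) (hp : 0 < p) (hn : 1 ≤ n)
    (hper : ∀ j, a ≤ j → j + p < a + n * p → σ (j + p) = σ j)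
    (hgood : 0 < balSeg x y (fun j => (σ j).1) a (a + p))
    (i : ℕ) (hia : a ≤ i) (hin : i < a + n * p) (hFU : FreqUntil x y σ i) :
    ∀ k j : ℕ, j + k * p = i → a ≤ j → FreqUntil x y σ j := by
  set σ' : ℕ → Bool := fun j => (σ j).1 with hσ'
  have hper' : ∀ q, a ≤ q → q + p < a + n * p → σ' (q + p) = σ' q := by
    intro q hq hq'
    simp only [hσ']
    rw [hper q hq hq']
  -- key: balSeg over full blocks is nonneg
  have key : ∀ k j : ℕ, a ≤ j → j + k * p < a + n * p →
      0 ≤ balSeg x y σ' j (j + k * p) := by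
    intro k
    induction k with
    | zero =>
      intro j _ _
      simp [balSeg]
    | succ k ih =>
      intro j hja hjk
      have hle1 : j ≤ j + p := by omega
      have hle2 : j + p ≤ j + (k + 1) * p := by nlinarith
      have hsplit := balSeg_add_s15 x y σ' hle1 hle2
      have hwin : balSeg x y σ' a (a + p) = balSeg x y σ' j (j + p) := by
        have := balSeg_window_s15 x y σ' a p hp (j - a)
          (fun q hq hq' => hper' q hq (by omega))
        rw [this]
        congr 1 <;> omega
      have h1 : 0 < balSeg x y σ' j (j + p) := by rw [← hwin]; exact hgood
      have h2 : 0 ≤ balSeg x y σ' (j + p) (j + (k + 1) * p) := by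
        have heq : j + (k + 1) * p = (j + p) + k * p := by ring
        rw [heq]
        exact ih (j + p) (by omega) (by omega)
      rw [hsplit]
      omega
  intro k j hjk hja
  obtain ⟨m, him, hψ, hbal⟩ := hFU
  refine ⟨m, by omega, hψ, ?_⟩
  have hji : j ≤ i := by omega
  have hsplit := balSeg_add_s15 x y σ' hji him
  have h0 : 0 ≤ balSeg x y σ' j i := by
    have := key k j hja (by omega)
    rwa [hjk] at this
  have hbal' : 0 ≤ balSeg x y σ' i m := hbal
  rw [hsplit]
  omega
end
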